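/- Proposition D.3 (position of facets relative to reflecting hyperplanes, type D): Let k ∈ [n] and I ∈ 𝔉_{D_n}. Then: (1) F(I) ∩ H(k) ≠ ∅ if and only if s_k(I) = I; (2) F(I) ⊆ H(k)^< if and only if: for 1 ≤ k ≤ n−1, either (k ∈ I and k+1 ∉ I) or (\overline{k+1} ∈ I and k̄ ∉ I); and for k = n, either (n ∈ I and \overline{n−1} ∉ I) or (n−1 ∈ I and n̄ ∉ I). -/

import Mathlib

/-!
Type `D_n` setup.  Coordinates are 0-indexed: the paper's index
`i ∈ {1, …, 2n}` corresponds to `i - 1 : Fin (2*n)`, and the bar involution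
`ī = 2n + 1 − i` corresponds to `Fin.rev`.
-/

noncomputable section

namespace WeightD

/-- The ambient space `E = {x ∈ ℝ^{2n} : x_i + x_{ī} = 0 for i ∈ [n]}`. -/
def E (n : ℕ) : Set (Fin (2 * n) → ℝ) :=
  {x | ∀ i : Fin (2 * n), (i : ℕ) < n → x i + x i.rev = 0}

/-- A signed subset: `|I ∩ {i, ī}| ≤ 1` for all `i ∈ [n]`, and `I` nonempty. -/
def Signed (n : ℕ) (I : Finset (Fin (2 * n))) : Prop :=
  I.Nonempty ∧ ∀ i : Fin (2 * n), (i : ℕ) < n → ¬(i ∈ I ∧ i.rev ∈ I)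

/-- The group `W_{D_n}` of even-signed permutations: signed permutations `u`
such that `|{u(1), …, u(n)} ∩ \overline{[n]}|` is even. -/
def WD (n : ℕ) : Set (Equiv.Perm (Fin (2 * n))) :=
  {u | (∀ i, u i.rev = (u i).rev) ∧
    Even ((Finset.univ.filter
      (fun i : Fin (2 * n) => (i : ℕ) < n ∧ n ≤ ((u i : Fin (2 * n)) : ℕ))).card)}

/-- The vertex of the weight polytope corresponding to `u`. -/
def ptD (n : ℕ) (a : Fin (2 * n) → ℝ) (u : Equiv.Perm (Fin (2 * n))) :
    Fin (2 * n) → ℝ :=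
  fun i => a (u i)

/-- The weight polytope `P_{D_n}`: convex hull of the `W_{D_n}`-orbit of `a`. -/
def PD (n : ℕ) (a : Fin (2 * n) → ℝ) : Set (Fin (2 * n) → ℝ) :=
  convexHull ℝ {p | ∃ u ∈ WD n, p = ptD n a u}

/-- The right-hand side `Σ_{i ∈ 𝓘} a_i` in the definition of the facet `F(I)`:
`𝓘 = [n-1] ∪ {n̄}` if `|I| = n` and `|I ∩ \overline{[n]}|` is odd, and
`𝓘 = [|I|]` otherwise (0-indexed, `n̄` is the coordinate `n : Fin (2n)`). -/
def targetD (n : ℕ) (hn : 3 ≤ n) (a : Fin (2 * n) → ℝ)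
    (I : Finset (Fin (2 * n))) : ℝ :=
  if I.card = n ∧ Odd ((I.filter (fun i : Fin (2 * n) => n ≤ (i : ℕ))).card) then
    (∑ i ∈ Finset.univ.filter (fun i : Fin (2 * n) => (i : ℕ) < n - 1), a i) +
      a ⟨n, by omega⟩
  else
    ∑ i ∈ Finset.univ.filter (fun i : Fin (2 * n) => (i : ℕ) < I.card), a i

/-- The facet `F(I)` for `I ∈ 𝔉_{D_n}`. -/
def FD (n : ℕ) (hn : 3 ≤ n) (a : Fin (2 * n) → ℝ) (I : Finset (Fin (2 * n))) :
    Set (Fin (2 * n) → ℝ) :=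
  {x ∈ PD n a | ∑ i ∈ I, x i = targetD n hn a I}

end WeightD

namespace WeightD

/-- The simple reflection `s_k` of type `D_n` (0-indexed `k < n`): for
`k + 1 < n` it is `(k, k+1)(k̄, \overline{k+1})`; for `k = n - 1` it is the
paper's `s_n = (n-1, n̄)(\overline{n-1}, n)`, i.e. (0-indexed)
`(n-2, n)(\overline{n-2}, \overline{n}) = (n-2, n)(n+1, n-1)`. -/
def sD (n : ℕ) (hn : 3 ≤ n) (k : ℕ) (hk : k < n) : Equiv.Perm (Fin (2 * n)) :=
  if h : k + 1 < n then
    (Equiv.swap ⟨k, by omega⟩ ⟨k + 1, by omega⟩) *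
      (Equiv.swap (Fin.rev ⟨k, by omega⟩) (Fin.rev ⟨k + 1, by omega⟩))
  else
    (Equiv.swap ⟨n - 2, by omega⟩ ⟨n, by omega⟩) *
      (Equiv.swap (Fin.rev ⟨n - 2, by omega⟩) (Fin.rev ⟨n, by omega⟩))

/-- The reflecting hyperplane `H(k)` of type `D_n`: for `k + 1 < n` it is
`{x ∈ E : x_k = x_{k+1}}`; for `k = n - 1` it is the paper's
`H(n) = {x ∈ E : x_{n-1} = x_{n̄}}`, i.e. (0-indexed) `x_{n-2} = x_n`. -/
def HD (n : ℕ) (hn : 3 ≤ n) (k : ℕ) (hk : k < n) : Set (Fin (2 * n) → ℝ) :=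
  if h : k + 1 < n then {x ∈ E n | x ⟨k, by omega⟩ = x ⟨k + 1, by omega⟩}
  else {x ∈ E n | x ⟨n - 2, by omega⟩ = x ⟨n, by omega⟩}

/-- The open half-space `H(k)^<` of type `D_n`. -/
def HDlt (n : ℕ) (hn : 3 ≤ n) (k : ℕ) (hk : k < n) : Set (Fin (2 * n) → ℝ) :=
  if h : k + 1 < n then {x ∈ E n | x ⟨k, by omega⟩ < x ⟨k + 1, by omega⟩}
  else {x ∈ E n | x ⟨n - 2, by omega⟩ < x ⟨n, by omega⟩}

/-- The condition of Proposition D.3(2): for `k + 1 < n`, either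
(`k ∈ I` and `k+1 ∉ I`) or (`\overline{k+1} ∈ I` and `k̄ ∉ I`); for the paper's
`k = n`, either (`n ∈ I` and `\overline{n-1} ∉ I`) or (`n-1 ∈ I` and `n̄ ∉ I`),
i.e. (0-indexed) either (`n-1 ∈ I` and `n+1 ∉ I`) or (`n-2 ∈ I` and `n ∉ I`). -/
def condD (n : ℕ) (hn : 3 ≤ n) (k : ℕ) (hk : k < n)
    (I : Finset (Fin (2 * n))) : Prop :=
  if h : k + 1 < n then
    (((⟨k, by omega⟩ : Fin (2 * n)) ∈ I ∧ (⟨k + 1, by omega⟩ : Fin (2 * n)) ∉ I) ∨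
      (Fin.rev (⟨k + 1, by omega⟩ : Fin (2 * n)) ∈ I ∧
        Fin.rev (⟨k, by omega⟩ : Fin (2 * n)) ∉ I))
  else
    (((⟨n - 1, by omega⟩ : Fin (2 * n)) ∈ I ∧
        (⟨n + 1, by omega⟩ : Fin (2 * n)) ∉ I) ∨
      ((⟨n - 2, by omega⟩ : Fin (2 * n)) ∈ I ∧
        (⟨n, by omega⟩ : Fin (2 * n)) ∉ I))

end WeightD

namespace WeightD
open Finset

variable {n : ℕ}

/-- the "lower representative" of the pair `{i, ī}`. -/
def lowOf (i : Fin (2*n)) : Fin (2*n) := if (i : ℕ) < n then i else i.rev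

/-- initial segment `{0, …, m-1}` of `Fin (2n)`. -/
def seg (n m : ℕ) : Finset (Fin (2*n)) := univ.filter (fun i => (i : ℕ) < m)

/-- parity indicator of the upper half. -/
def chi {n : ℕ} (j : Fin (2*n)) : ZMod 2 := if n ≤ (j : ℕ) then 1 else 0

lemma mem_seg {m : ℕ} {i : Fin (2*n)} : i ∈ seg n m ↔ (i : ℕ) < m := by
  simp [seg]

lemma rev_val (i : Fin (2*n)) : (i.rev : ℕ) = 2*n - (i + 1) := Fin.val_rev i

lemma rev_ne_self (i : Fin (2*n)) : i.rev ≠ i := by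
  have := i.isLt
  simp only [ne_eq, Fin.ext_iff, rev_val]
  omega

lemma rev_eq_comm {i j : Fin (2*n)} : i = j.rev ↔ j = i.rev := by
  constructor <;> (rintro rfl; rw [Fin.rev_rev])

lemma rev_inj' {i j : Fin (2*n)} (h : i.rev = j.rev) : i = j := by
  have := congrArg Fin.rev h; simpa using this

lemma seg_card {m : ℕ} (hm : m ≤ 2*n) : (seg n m).card = m := by
  have h : seg n m = (univ : Finset (Fin m)).image (Fin.castLE hm) := by
    ext i
    simp only [mem_seg, Finset.mem_image, Finset.mem_univ, true_and]
    constructor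
    · intro hi; exact ⟨⟨i, hi⟩, rfl⟩
    · rintro ⟨j, rfl⟩; exact j.isLt
  rw [h, Finset.card_image_of_injective _ (Fin.castLE_injective hm), Finset.card_univ,
    Fintype.card_fin]

lemma chi_low {i : Fin (2*n)} (h : (i:ℕ) < n) : chi i = 0 := by
  simp [chi, Nat.not_le.2 h]

lemma chi_high {i : Fin (2*n)} (h : n ≤ (i:ℕ)) : chi i = 1 := by
  simp [chi, h]

lemma chi_rev (i : Fin (2*n)) : chi i.rev = 1 + chi i := by
  have h1 := i.isLt
  by_cases h : (i:ℕ) < n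
  · rw [chi_low h, chi_high (by rw [rev_val]; omega), add_zero]
  · rw [chi_high (le_of_not_gt h), chi_low (by rw [rev_val]; omega)]
    decide

lemma lowOf_lt (i : Fin (2*n)) : ((lowOf i : Fin (2*n)) : ℕ) < n := by
  have := i.isLt
  unfold lowOf
  split_ifs with h
  · exact h
  · rw [rev_val]; omega

lemma lowOf_pair {x i : Fin (2*n)} (h : lowOf x = lowOf i) : x = i ∨ x = i.rev := by
  unfold lowOf at h
  split_ifs at h
  · left; exact h
  · right; exact h
  · right; exact rev_eq_comm.1 h.symm
  · left; exact rev_inj' h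

lemma lowOf_eq_self {i : Fin (2*n)} (h : (i:ℕ) < n) : lowOf i = i := if_pos h

lemma lowOf_rev (i : Fin (2*n)) : lowOf i.rev = lowOf i := by
  have := i.isLt
  unfold lowOf
  rcases lt_or_ge (i:ℕ) n with h | h
  · rw [if_neg (by rw [rev_val]; omega), Fin.rev_rev, if_pos h]
  · rw [if_pos (by rw [rev_val]; omega), if_neg (by omega)]

lemma signed_not_pair {I : Finset (Fin (2*n))} (hI : Signed n I) (i : Fin (2*n)) :
    ¬(i ∈ I ∧ i.rev ∈ I) := by
  have hl := i.isLt
  by_cases h : (i:ℕ) < n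
  · exact hI.2 i h
  · intro ⟨h1, h2⟩
    exact hI.2 i.rev (by rw [rev_val]; omega) ⟨h2, by rwa [Fin.rev_rev]⟩

lemma signed_card_le {I : Finset (Fin (2*n))} (hI : Signed n I) : I.card ≤ n := by
  have hinj : Set.InjOn lowOf (I : Set (Fin (2*n))) := by
    intro x hx y hy h
    rcases lowOf_pair h with h' | h'
    · exact h'
    · exact absurd ⟨Finset.mem_coe.1 hy, h' ▸ Finset.mem_coe.1 hx⟩ (signed_not_pair hI y)
  have h1 : (I.image lowOf).card = I.card := Finset.card_image_of_injOn hinj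
  have h2 : I.image lowOf ⊆ seg n n := fun j hj => by
    obtain ⟨i, _, rfl⟩ := Finset.mem_image.1 hj
    exact mem_seg.2 (lowOf_lt i)
  calc I.card = (I.image lowOf).card := h1.symm
    _ ≤ (seg n n).card := Finset.card_le_card h2
    _ = n := seg_card (by omega)

lemma transversal {I : Finset (Fin (2*n))} (hI : Signed n I) (hc : I.card = n) :
    ∀ i : Fin (2*n), i ∈ I ∨ i.rev ∈ I := by
  have hinj : Set.InjOn lowOf (I : Set (Fin (2*n))) := by
    intro x hx y hy h
    rcases lowOf_pair h with h' | h'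
    · exact h'
    · exact absurd ⟨Finset.mem_coe.1 hy, h' ▸ Finset.mem_coe.1 hx⟩ (signed_not_pair hI y)
  have h1 : (I.image lowOf).card = I.card := Finset.card_image_of_injOn hinj
  have h2 : I.image lowOf ⊆ seg n n := fun j hj => by
    obtain ⟨i, _, rfl⟩ := Finset.mem_image.1 hj
    exact mem_seg.2 (lowOf_lt i)
  have heq : I.image lowOf = seg n n :=
    Finset.eq_of_subset_of_card_le h2 (by rw [h1, hc, seg_card (by omega)])
  intro i
  have : lowOf i ∈ I.image lowOf := heq ▸ mem_seg.2 (lowOf_lt i)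
  obtain ⟨x, hx, hxi⟩ := Finset.mem_image.1 this
  rcases lowOf_pair hxi with h' | h'
  · left; exact h' ▸ hx
  · right; exact h' ▸ hx

end WeightD
namespace WeightD
open Finset

variable {n : ℕ}

lemma tsum {M : Type*} [AddCommMonoid M] {J : Finset (Fin (2*n))} (hJ : Signed n J)
    (hc : J.card = n) (d : Fin (2*n) → M) (hd : ∀ i, d i.rev = d i) :
    ∑ j ∈ J, d j = ∑ i ∈ seg n n, d i := by
  have htr := transversal hJ hc
  refine Finset.sum_nbij' (fun j => lowOf j) (fun i => if i ∈ J then i else i.rev)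
    (fun a _ => mem_seg.2 (lowOf_lt a)) (fun b _ => ?_) (fun a ha => ?_) (fun b hb => ?_)
    (fun a _ => ?_)
  · by_cases h : b ∈ J
    · rwa [if_pos h]
    · rw [if_neg h]
      rcases htr b with h' | h'
      · exact absurd h' h
      · exact h'
  · by_cases h : (a : ℕ) < n
    · rw [lowOf_eq_self h, if_pos ha]
    · rw [lowOf, if_neg h]
      have : a.rev ∉ J := fun hrev => signed_not_pair hJ a ⟨ha, hrev⟩
      rw [if_neg this, Fin.rev_rev]
  · have hb' := mem_seg.1 hb
    by_cases h : b ∈ J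
    · rw [if_pos h, lowOf_eq_self hb']
    · rw [if_neg h, lowOf_rev, lowOf_eq_self hb']
  · dsimp only [lowOf]
    split_ifs
    · rfl
    · exact (hd a).symm

lemma memWD_iff {u : Equiv.Perm (Fin (2*n))} :
    u ∈ WD n ↔ (∀ i, u i.rev = (u i).rev) ∧ ∑ i ∈ seg n n, chi (u i) = 0 := by
  unfold WD
  simp only [Set.mem_setOf_eq]
  refine and_congr_right fun _ => ?_
  rw [← ZMod.natCast_eq_zero_iff_even]
  have h1 : (Finset.univ.filter
      (fun i : Fin (2 * n) => (i : ℕ) < n ∧ n ≤ ((u i : Fin (2 * n)) : ℕ)))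
      = (seg n n).filter (fun i => n ≤ ((u i : Fin (2*n)) : ℕ)) := by
    rw [seg, Finset.filter_filter]
  rw [h1, Finset.card_filter]
  push_cast
  simp only [chi]

lemma seg_signed (hn : 0 < n) : Signed n (seg n n) := by
  constructor
  · exact ⟨⟨0, by omega⟩, mem_seg.2 hn⟩
  · intro i hi ⟨_, h2⟩
    have := mem_seg.1 h2
    rw [rev_val] at this
    have := i.isLt
    omega

lemma sum_d {u : Equiv.Perm (Fin (2*n))} (hu : ∀ i, u i.rev = (u i).rev)
    {J : Finset (Fin (2*n))} (hJ : Signed n J) (hc : J.card = n) :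
    ∑ j ∈ J, chi (u j) = ∑ j ∈ J, chi j + ∑ i ∈ seg n n, chi (u i) := by
  have h2 : (2 : ZMod 2) = 0 := by decide
  have hd : ∀ i : Fin (2*n), chi (u i.rev) + chi i.rev = chi (u i) + chi i := by
    intro i
    rw [hu i, chi_rev (u i), chi_rev i]
    linear_combination h2
  have key := tsum hJ hc (fun i => chi (u i) + chi i) hd
  rw [Finset.sum_add_distrib, Finset.sum_add_distrib] at key
  have hseg0 : ∑ i ∈ seg n n, chi i = 0 :=
    Finset.sum_eq_zero (fun i hi => chi_low (mem_seg.1 hi))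
  rw [hseg0, add_zero] at key
  have hJJ : ∑ j ∈ J, chi j + ∑ j ∈ J, chi j = 0 := by
    rw [← Finset.sum_add_distrib]
    exact Finset.sum_eq_zero (fun i _ => by linear_combination chi i * h2)
  linear_combination key - hJJ

lemma signed_image {u : Equiv.Perm (Fin (2*n))} (hu : ∀ i, u i.rev = (u i).rev)
    {I : Finset (Fin (2*n))} (hI : Signed n I) : Signed n (I.image u) := by
  constructor
  · exact hI.1.image u
  · intro j _ ⟨h1, h2⟩
    obtain ⟨i1, hi1, hui1⟩ := Finset.mem_image.1 h1
    obtain ⟨i2, hi2, hui2⟩ := Finset.mem_image.1 h2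
    have : u i2.rev = u i1 := by rw [hu i2, hui2, hui1, Fin.rev_rev]
    have : i2.rev = i1 := u.injective this
    exact signed_not_pair hI i2 ⟨hi2, this ▸ hi1⟩

lemma parimg {u : Equiv.Perm (Fin (2*n))} (hu : u ∈ WD n)
    {J : Finset (Fin (2*n))} (hJ : Signed n J) (hc : J.card = n) :
    ∑ j ∈ J.image u, chi j = ∑ j ∈ J, chi j := by
  obtain ⟨hequi, hsum⟩ := memWD_iff.1 hu
  rw [Finset.sum_image (fun x _ y _ h => u.injective h), sum_d hequi hJ hc, hsum, add_zero]

lemma one_memWD : (1 : Equiv.Perm (Fin (2*n))) ∈ WD n := by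
  rw [memWD_iff]
  refine ⟨fun i => rfl, Finset.sum_eq_zero (fun i hi => chi_low (mem_seg.1 hi))⟩

lemma mul_memWD {u v : Equiv.Perm (Fin (2*n))} (hn : 0 < n)
    (hu : u ∈ WD n) (hv : v ∈ WD n) : u * v ∈ WD n := by
  obtain ⟨hue, hus⟩ := memWD_iff.1 hu
  obtain ⟨hve, hvs⟩ := memWD_iff.1 hv
  rw [memWD_iff]
  constructor
  · intro i
    simp only [Equiv.Perm.mul_apply, hve, hue]
  · have h1 : ∑ i ∈ seg n n, chi ((u * v) i) = ∑ j ∈ (seg n n).image v, chi (u j) := by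
      rw [Finset.sum_image (fun x _ y _ h => v.injective h)]
      rfl
    rw [h1, sum_d hue (signed_image hve (seg_signed hn))
      (by rw [Finset.card_image_of_injective _ v.injective, seg_card (by omega)]),
      Finset.sum_image (fun x _ y _ h => v.injective h), hvs, hus, add_zero]

end WeightD
namespace WeightD
open Finset

variable {n : ℕ}

/-- the double transposition `(α β)(ᾱ β̄)`. -/
def T1 (α β : Fin (2*n)) : Equiv.Perm (Fin (2*n)) :=
  Equiv.swap α β * Equiv.swap α.rev β.rev

/-- the double pair-flip `(α ᾱ)(p p̄)`. -/
def T2 (α p : Fin (2*n)) : Equiv.Perm (Fin (2*n)) :=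
  Equiv.swap α α.rev * Equiv.swap p p.rev

section T1
variable {α β : Fin (2*n)} (h1 : β ≠ α) (h2 : β ≠ α.rev)

include h2 in
lemma ne_rev' : α ≠ β.rev := fun h => h2 (rev_eq_comm.1 h)

include h1 h2 in
lemma T1_apply_a : T1 α β α = β := by
  rw [T1, Equiv.Perm.mul_apply,
    Equiv.swap_apply_of_ne_of_ne (rev_ne_self α).symm (ne_rev' h2), Equiv.swap_apply_left]

include h1 h2 in
lemma T1_apply_b : T1 α β β = α := by
  rw [T1, Equiv.Perm.mul_apply,
    Equiv.swap_apply_of_ne_of_ne h2 (rev_ne_self β).symm, Equiv.swap_apply_right]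

include h1 h2 in
lemma T1_apply_ra : T1 α β α.rev = β.rev := by
  rw [T1, Equiv.Perm.mul_apply, Equiv.swap_apply_left,
    Equiv.swap_apply_of_ne_of_ne (fun h => h2 (rev_eq_comm.1 h.symm)) (rev_ne_self β)]

include h1 h2 in
lemma T1_apply_rb : T1 α β β.rev = α.rev := by
  rw [T1, Equiv.Perm.mul_apply, Equiv.swap_apply_right,
    Equiv.swap_apply_of_ne_of_ne (rev_ne_self α) (fun h => h2 h.symm)]

lemma T1_apply_other {i : Fin (2*n)} (ha : i ≠ α) (hb : i ≠ β)
    (hra : i ≠ α.rev) (hrb : i ≠ β.rev) : T1 α β i = i := by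
  rw [T1, Equiv.Perm.mul_apply, Equiv.swap_apply_of_ne_of_ne hra hrb,
    Equiv.swap_apply_of_ne_of_ne ha hb]

include h1 h2 in
lemma T1_equivariant : ∀ i, T1 α β i.rev = (T1 α β i).rev := by
  intro i
  rcases eq_or_ne i α with rfl | ha
  · rw [T1_apply_a h1 h2, T1_apply_ra h1 h2]
  rcases eq_or_ne i β with rfl | hb
  · rw [T1_apply_b h1 h2, T1_apply_rb h1 h2]
  rcases eq_or_ne i α.rev with rfl | hra
  · rw [Fin.rev_rev, T1_apply_a h1 h2, T1_apply_ra h1 h2, Fin.rev_rev]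
  rcases eq_or_ne i β.rev with rfl | hrb
  · rw [Fin.rev_rev, T1_apply_b h1 h2, T1_apply_rb h1 h2, Fin.rev_rev]
  · rw [T1_apply_other ha hb hra hrb, T1_apply_other
      (fun h => hra (rev_eq_comm.1 h.symm)) (fun h => hrb (rev_eq_comm.1 h.symm))
      (fun h => ha (rev_inj' h)) (fun h => hb (rev_inj' h))]

include h1 h2 in
lemma T1_memWD (hn : 0 < n) : T1 α β ∈ WD n := by
  rw [memWD_iff]
  refine ⟨T1_equivariant h1 h2, ?_⟩
  have hab : lowOf α ≠ lowOf β := by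
    intro h
    rcases lowOf_pair h with h' | h'
    · exact h1 h'.symm
    · exact (ne_rev' h2) h'
  have key : ∀ i ∈ seg n n, chi (T1 α β i) =
      (if i = lowOf α then chi α + chi β else 0) +
      (if i = lowOf β then chi α + chi β else 0) := by
    intro i hi
    have hi' := mem_seg.1 hi
    rcases eq_or_ne i (lowOf α) with rfl | hia
    · rw [if_pos rfl, if_neg hab, add_zero]
      by_cases h : (α : ℕ) < n
      · rw [lowOf_eq_self h] at *
        rw [T1_apply_a h1 h2, chi_low h, zero_add]
      · rw [lowOf, if_neg h] at *
        rw [T1_apply_ra h1 h2, chi_rev, chi_high (le_of_not_gt h)]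
    rcases eq_or_ne i (lowOf β) with rfl | hib
    · rw [if_neg hia, if_pos rfl, zero_add]
      by_cases h : (β : ℕ) < n
      · rw [lowOf_eq_self h] at *
        rw [T1_apply_b h1 h2, chi_low h, add_zero]
      · rw [lowOf, if_neg h] at *
        rw [T1_apply_rb h1 h2, chi_rev, chi_high (le_of_not_gt h), add_comm]
    · rw [if_neg hia, if_neg hib, add_zero]
      have hxa : i ≠ α := by
        intro rfl'
        subst rfl'
        exact hia (lowOf_eq_self hi').symm
      have hxra : i ≠ α.rev := by
        intro h
        subst h
        rw [rev_val] at hi'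
        have := α.isLt
        rw [lowOf, if_neg (by omega)] at hia
        exact hia rfl
      have hxb : i ≠ β := by
        intro h
        subst h
        exact hib (lowOf_eq_self hi').symm
      have hxrb : i ≠ β.rev := by
        intro h
        subst h
        rw [rev_val] at hi'
        have := β.isLt
        rw [lowOf, if_neg (by omega)] at hib
        exact hib rfl
      rw [T1_apply_other hxa hxb hxra hxrb, chi_low hi']
  rw [Finset.sum_congr rfl key, Finset.sum_add_distrib,
    Finset.sum_ite_eq' (seg n n) (lowOf α), Finset.sum_ite_eq' (seg n n) (lowOf β),
    if_pos (mem_seg.2 (lowOf_lt α)), if_pos (mem_seg.2 (lowOf_lt β))]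
  exact CharTwo.add_self_eq_zero _

end T1

section T2
variable {α p : Fin (2*n)} (h1 : p ≠ α) (h2 : p ≠ α.rev)

include h1 h2 in
lemma T2_apply_a : T2 α p α = α.rev := by
  rw [T2, Equiv.Perm.mul_apply,
    Equiv.swap_apply_of_ne_of_ne (fun h => h1 h.symm) (fun h => h2 (rev_eq_comm.1 h)),
    Equiv.swap_apply_left]

include h1 h2 in
lemma T2_apply_ra : T2 α p α.rev = α := by
  rw [T2, Equiv.Perm.mul_apply,
    Equiv.swap_apply_of_ne_of_ne (fun h => h2 h.symm) (fun h => h1 (rev_inj' h).symm),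
    Equiv.swap_apply_right]

include h1 h2 in
lemma T2_apply_p : T2 α p p = p.rev := by
  rw [T2, Equiv.Perm.mul_apply, Equiv.swap_apply_left,
    Equiv.swap_apply_of_ne_of_ne (fun h => h2 (rev_eq_comm.1 h.symm))
      (fun h => h1 (rev_inj' h))]

include h1 h2 in
lemma T2_apply_rp : T2 α p p.rev = p := by
  rw [T2, Equiv.Perm.mul_apply, Equiv.swap_apply_right,
    Equiv.swap_apply_of_ne_of_ne h1 h2]

lemma T2_apply_other {i : Fin (2*n)} (ha : i ≠ α) (hra : i ≠ α.rev)
    (hp : i ≠ p) (hrp : i ≠ p.rev) : T2 α p i = i := by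
  rw [T2, Equiv.Perm.mul_apply, Equiv.swap_apply_of_ne_of_ne hp hrp,
    Equiv.swap_apply_of_ne_of_ne ha hra]

include h1 h2 in
lemma T2_equivariant : ∀ i, T2 α p i.rev = (T2 α p i).rev := by
  intro i
  rcases eq_or_ne i α with rfl | ha
  · rw [T2_apply_a h1 h2, T2_apply_ra h1 h2, Fin.rev_rev]
  rcases eq_or_ne i α.rev with rfl | hra
  · rw [Fin.rev_rev, T2_apply_a h1 h2, T2_apply_ra h1 h2]
  rcases eq_or_ne i p with rfl | hp
  · rw [T2_apply_p h1 h2, T2_apply_rp h1 h2, Fin.rev_rev]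
  rcases eq_or_ne i p.rev with rfl | hrp
  · rw [Fin.rev_rev, T2_apply_p h1 h2, T2_apply_rp h1 h2]
  · rw [T2_apply_other ha hra hp hrp, T2_apply_other
      (fun h => hra (rev_eq_comm.1 h.symm))
      (fun h => ha (rev_inj' h))
      (fun h => hrp (rev_eq_comm.1 h.symm))
      (fun h => hp (rev_inj' h))]

include h1 h2 in
lemma T2_memWD (hn : 0 < n) : T2 α p ∈ WD n := by
  rw [memWD_iff]
  refine ⟨T2_equivariant h1 h2, ?_⟩
  have hab : lowOf α ≠ lowOf p := by
    intro h
    rcases lowOf_pair (h.symm) with h' | h'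
    · exact h1 h'
    · exact h2 h'
  have key : ∀ i ∈ seg n n, chi (T2 α p i) =
      (if i = lowOf α then 1 else 0) + (if i = lowOf p then 1 else 0) := by
    intro i hi
    have hi' := mem_seg.1 hi
    rcases eq_or_ne i (lowOf α) with rfl | hia
    · rw [if_pos rfl, if_neg hab, add_zero]
      by_cases h : (α : ℕ) < n
      · rw [lowOf_eq_self h] at *
        rw [T2_apply_a h1 h2, chi_rev, chi_low h, add_zero]
      · rw [lowOf, if_neg h] at *
        rw [T2_apply_ra h1 h2, chi_high (le_of_not_gt h)]
    rcases eq_or_ne i (lowOf p) with rfl | hip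
    · rw [if_neg hia, if_pos rfl, zero_add]
      by_cases h : (p : ℕ) < n
      · rw [lowOf_eq_self h] at *
        rw [T2_apply_p h1 h2, chi_rev, chi_low h, add_zero]
      · rw [lowOf, if_neg h] at *
        rw [T2_apply_rp h1 h2, chi_high (le_of_not_gt h)]
    · rw [if_neg hia, if_neg hip, add_zero]
      have hxa : i ≠ α := fun h => by subst h; exact hia (lowOf_eq_self hi').symm
      have hxra : i ≠ α.rev := by
        intro h
        subst h
        rw [rev_val] at hi'
        have := α.isLt
        rw [lowOf, if_neg (by omega)] at hia
        exact hia rfl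
      have hxp : i ≠ p := fun h => by subst h; exact hip (lowOf_eq_self hi').symm
      have hxrp : i ≠ p.rev := by
        intro h
        subst h
        rw [rev_val] at hi'
        have := p.isLt
        rw [lowOf, if_neg (by omega)] at hip
        exact hip rfl
      rw [T2_apply_other hxa hxra hxp hxrp, chi_low hi']
  rw [Finset.sum_congr rfl key, Finset.sum_add_distrib,
    Finset.sum_ite_eq' (seg n n) (lowOf α), Finset.sum_ite_eq' (seg n n) (lowOf p),
    if_pos (mem_seg.2 (lowOf_lt α)), if_pos (mem_seg.2 (lowOf_lt p))]
  decide

end T2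

end WeightD
namespace WeightD
open Finset

variable {n : ℕ}

/-- the set `J₁ = {0, …, n-2, n}` (0-indexed), minimizer among odd transversals. -/
def J1 (n : ℕ) : Finset (Fin (2*n)) :=
  univ.filter (fun i => (i : ℕ) < n - 1 ∨ (i : ℕ) = n)

lemma mem_J1 {i : Fin (2*n)} : i ∈ J1 n ↔ ((i : ℕ) < n - 1 ∨ (i : ℕ) = n) := by
  simp [J1]

lemma J1_insert (hn : 0 < n) :
    J1 n = insert (⟨n, by omega⟩ : Fin (2*n)) (seg n (n-1)) := by
  ext i
  simp only [mem_J1, Finset.mem_insert, mem_seg, Fin.ext_iff]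
  omega

lemma J1_signed (hn : 2 ≤ n) : Signed n (J1 n) := by
  constructor
  · exact ⟨⟨0, by omega⟩, mem_J1.2 (by simp; omega)⟩
  · rintro i hi ⟨ha, hb⟩
    rw [mem_J1] at ha hb
    rw [rev_val] at hb
    have := i.isLt
    omega

lemma J1_card (hn : 0 < n) : (J1 n).card = n := by
  rw [J1_insert hn, Finset.card_insert_of_notMem (by simp [mem_seg]),
    seg_card (by omega)]
  omega

lemma J1_chi (hn : 0 < n) : ∑ j ∈ J1 n, chi j = 1 := by
  rw [J1_insert hn, Finset.sum_insert (by simp [mem_seg]),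
    Finset.sum_eq_zero (fun i hi => chi_low (by have := mem_seg.1 hi; omega)), add_zero,
    chi_high (by simp)]

lemma chi_sum_eq (I : Finset (Fin (2*n))) :
    (((I.filter (fun i : Fin (2*n) => n ≤ (i : ℕ))).card : ZMod 2)) = ∑ j ∈ I, chi j := by
  rw [Finset.card_filter]
  push_cast
  simp only [chi]

section AVals
variable {a : Fin (2*n) → ℝ} (haE : a ∈ E n)
  (hmono : ∀ i j : Fin (2*n), (i : ℕ) < (j : ℕ) → (j : ℕ) < n → a i < a j)
  (haneg : ∀ i : Fin (2*n), (i : ℕ) < n → a i < 0)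

include haE in
lemma arev (i : Fin (2*n)) : a i.rev = - a i := by
  have hl := i.isLt
  by_cases h : (i : ℕ) < n
  · have := haE i h
    linarith
  · have h2 : (i.rev : ℕ) < n := by rw [rev_val]; omega
    have := haE i.rev h2
    rw [Fin.rev_rev] at this
    linarith

include haE haneg in
lemma apos (i : Fin (2*n)) (h : n ≤ (i : ℕ)) : 0 < a i := by
  have hl := i.isLt
  have h2 : (i.rev : ℕ) < n := by rw [rev_val]; omega
  have := haneg i.rev h2
  have := arev haE i.rev
  rw [Fin.rev_rev] at this
  linarith

include haE hmono haneg in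
lemma amono {i j : Fin (2*n)} (h : (i : ℕ) < (j : ℕ)) : a i < a j := by
  have hi := i.isLt
  have hj := j.isLt
  by_cases hjn : (j : ℕ) < n
  · exact hmono i j h hjn
  · by_cases hin : (i : ℕ) < n
    · exact lt_trans (haneg i hin) (apos haE haneg j (le_of_not_gt hjn))
    · have hri : (i.rev : ℕ) < n := by rw [rev_val]; omega
      have hh : (j.rev : ℕ) < (i.rev : ℕ) := by rw [rev_val, rev_val]; omega
      have := hmono j.rev i.rev hh hri
      rw [arev haE i, arev haE j] at *
      have h1 := arev haE i.rev
      have h2 := arev haE j.rev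
      rw [Fin.rev_rev] at h1 h2
      linarith

include haE hmono haneg in
lemma amono_le {i j : Fin (2*n)} (h : (i : ℕ) ≤ (j : ℕ)) : a i ≤ a j := by
  rcases eq_or_lt_of_le h with h' | h'
  · have : i = j := Fin.ext h'
    rw [this]
  · exact le_of_lt (amono haE hmono haneg h')

include haE hmono haneg in
lemma subset_min_le (J : Finset (Fin (2*n))) :
    ∑ i ∈ seg n J.card, a i ≤ ∑ j ∈ J, a j := by
  classical
  set m := J.card with hm
  have hm2n : m ≤ 2*n := by
    rw [hm]
    calc J.card ≤ (univ : Finset (Fin (2*n))).card := Finset.card_le_card (Finset.subset_univ J)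
      _ = 2*n := by rw [Finset.card_univ, Fintype.card_fin]
  have hsplit1 : ∑ j ∈ J, a j = ∑ j ∈ J ∩ seg n m, a j + ∑ j ∈ J \ seg n m, a j :=
    (Finset.sum_inter_add_sum_sdiff J (seg n m) a).symm
  have hsplit2 : ∑ j ∈ seg n m, a j = ∑ j ∈ seg n m ∩ J, a j + ∑ j ∈ seg n m \ J, a j :=
    (Finset.sum_inter_add_sum_sdiff (seg n m) J a).symm
  have hcard : (J \ seg n m).card = (seg n m \ J).card := by
    have h1 := Finset.card_inter_add_card_sdiff J (seg n m)
    have h2 := Finset.card_inter_add_card_sdiff (seg n m) J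
    rw [Finset.inter_comm] at h2
    rw [seg_card hm2n] at h2
    omega
  rcases Finset.eq_empty_or_nonempty (J \ seg n m) with he | hne
  · have he2 : seg n m \ J = ∅ := by
      rw [← Finset.card_eq_zero, ← hcard, he, Finset.card_empty]
    rw [hsplit1, hsplit2, he, he2, Finset.sum_empty, Finset.inter_comm]
  · obtain ⟨j0, hj0⟩ := hne
    have hj0' := Finset.mem_sdiff.1 hj0
    have hmlt : m < 2*n := by
      have := j0.isLt
      have : ¬ ((j0:ℕ) < m) := fun h => hj0'.2 (mem_seg.2 h)
      omega
    have hb1 : ((J \ seg n m).card : ℝ) * a ⟨m, hmlt⟩ ≤ ∑ j ∈ J \ seg n m, a j := by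
      have := Finset.card_nsmul_le_sum (J \ seg n m) a (a ⟨m, hmlt⟩) (fun x hx => by
        apply amono_le haE hmono haneg
        have := Finset.mem_sdiff.1 hx
        have : ¬ ((x:ℕ) < m) := fun h => this.2 (mem_seg.2 h)
        simpa using by omega)
      simpa [nsmul_eq_mul] using this
    have hb2 : ∑ j ∈ seg n m \ J, a j ≤ ((seg n m \ J).card : ℝ) * a ⟨m, hmlt⟩ := by
      have := Finset.sum_le_card_nsmul (seg n m \ J) a (a ⟨m, hmlt⟩) (fun x hx => by
        apply amono_le haE hmono haneg
        have := Finset.mem_sdiff.1 hx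
        have := mem_seg.1 this.1
        simpa using by omega)
      simpa [nsmul_eq_mul] using this
    rw [hsplit1, hsplit2, Finset.inter_comm J (seg n m)]
    rw [hcard] at hb1
    linarith

include haE hmono haneg in
lemma subset_min_lt (J : Finset (Fin (2*n))) (hne : J ≠ seg n J.card) :
    ∑ i ∈ seg n J.card, a i < ∑ j ∈ J, a j := by
  classical
  set m := J.card with hm
  have hm2n : m ≤ 2*n := by
    rw [hm]
    calc J.card ≤ (univ : Finset (Fin (2*n))).card := Finset.card_le_card (Finset.subset_univ J)
      _ = 2*n := by rw [Finset.card_univ, Fintype.card_fin]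
  have hsplit1 : ∑ j ∈ J, a j = ∑ j ∈ J ∩ seg n m, a j + ∑ j ∈ J \ seg n m, a j :=
    (Finset.sum_inter_add_sum_sdiff J (seg n m) a).symm
  have hsplit2 : ∑ j ∈ seg n m, a j = ∑ j ∈ seg n m ∩ J, a j + ∑ j ∈ seg n m \ J, a j :=
    (Finset.sum_inter_add_sum_sdiff (seg n m) J a).symm
  have hcard : (J \ seg n m).card = (seg n m \ J).card := by
    have h1 := Finset.card_inter_add_card_sdiff J (seg n m)
    have h2 := Finset.card_inter_add_card_sdiff (seg n m) J
    rw [Finset.inter_comm] at h2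
    rw [seg_card hm2n] at h2
    omega
  rcases Finset.eq_empty_or_nonempty (J \ seg n m) with he | hne2
  · exfalso
    apply hne
    apply Finset.eq_of_subset_of_card_le
    · intro x hx
      by_contra hxs
      have hmem : x ∈ J \ seg n m := Finset.mem_sdiff.2 ⟨hx, hxs⟩
      rw [he] at hmem
      exact absurd hmem (Finset.notMem_empty x)
    · rw [seg_card hm2n]
  · obtain ⟨j0, hj0⟩ := hne2
    have hj0' := Finset.mem_sdiff.1 hj0
    have hmlt : m < 2*n := by
      have := j0.isLt
      have : ¬ ((j0:ℕ) < m) := fun h => hj0'.2 (mem_seg.2 h)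
      omega
    have hb1 : ((J \ seg n m).card : ℝ) * a ⟨m, hmlt⟩ ≤ ∑ j ∈ J \ seg n m, a j := by
      have := Finset.card_nsmul_le_sum (J \ seg n m) a (a ⟨m, hmlt⟩) (fun x hx => by
        apply amono_le haE hmono haneg
        have := Finset.mem_sdiff.1 hx
        have : ¬ ((x:ℕ) < m) := fun h => this.2 (mem_seg.2 h)
        simpa using by omega)
      simpa [nsmul_eq_mul] using this
    have hb2 : ∑ j ∈ seg n m \ J, a j < ((seg n m \ J).card : ℝ) * a ⟨m, hmlt⟩ := by
      have hne3 : (seg n m \ J).Nonempty := by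
        rw [← Finset.card_pos, ← hcard, Finset.card_pos]
        exact ⟨j0, hj0⟩
      have := Finset.sum_lt_sum_of_nonempty hne3 (f := a) (g := fun _ => a ⟨m, hmlt⟩)
        (fun x hx => by
          apply amono haE hmono haneg
          have := Finset.mem_sdiff.1 hx
          have := mem_seg.1 this.1
          simpa using this)
      rw [Finset.sum_const, nsmul_eq_mul] at this
      exact this
    rw [hsplit1, hsplit2, Finset.inter_comm J (seg n m)]
    rw [hcard] at hb1
    have hpos : 0 < (seg n m \ J).card := by
      rw [← hcard, Finset.card_pos]
      exact ⟨j0, hj0⟩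
    linarith

end AVals

end WeightD
namespace WeightD
open Finset

variable {n : ℕ}

lemma seg_signed' {m : ℕ} (h1 : 0 < m) (h2 : m ≤ n) : Signed n (seg n m) := by
  constructor
  · exact ⟨⟨0, by omega⟩, mem_seg.2 h1⟩
  · rintro i hi ⟨ha, hb⟩
    have := mem_seg.1 hb
    rw [rev_val] at this
    have := i.isLt
    omega

/-- the missing lower half of a transversal. -/
def missS (J : Finset (Fin (2*n))) : Finset (Fin (2*n)) :=
  (seg n n).filter (fun i => i ∉ J)

lemma mem_missS {J : Finset (Fin (2*n))} {i : Fin (2*n)} :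
    i ∈ missS J ↔ ((i : ℕ) < n ∧ i ∉ J) := by
  simp [missS, mem_seg, Finset.mem_filter]

lemma missS_card {J : Finset (Fin (2*n))} (hJ : Signed n J) (hc : J.card = n) :
    ((missS J).card : ZMod 2) = ∑ j ∈ J, chi j := by
  have htr := transversal hJ hc
  have hbij : (missS J).card = (J.filter (fun j : Fin (2*n) => n ≤ (j : ℕ))).card := by
    apply Finset.card_nbij (i := Fin.rev)
    · intro x hx
      rw [Finset.mem_coe, mem_missS] at hx
      rcases htr x with h | h
      · exact absurd h hx.2
      · exact Finset.mem_filter.2 ⟨h, by rw [rev_val]; omega⟩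
    · intro x hx y hy h
      exact rev_inj' h
    · intro j hj
      have hj' := Finset.mem_filter.1 hj
      have := j.isLt
      refine ⟨j.rev, Finset.mem_coe.2 (mem_missS.2 ⟨by rw [rev_val]; omega, ?_⟩), Fin.rev_rev j⟩
      intro hrev
      exact signed_not_pair hJ j.rev ⟨hrev, by rw [Fin.rev_rev]; exact hj'.1⟩
  rw [hbij, chi_sum_eq]

lemma transversal_sum {J : Finset (Fin (2*n))} (hJ : Signed n J) (hc : J.card = n)
    (a : Fin (2*n) → ℝ) (haE : a ∈ E n) :
    ∑ j ∈ J, a j = ∑ i ∈ seg n n, a i - 2 * ∑ i ∈ missS J, a i := by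
  have htr := transversal hJ hc
  have hd : ∀ i : Fin (2*n), (if i.rev ∈ J then a i.rev else a i.rev.rev)
      = (if i ∈ J then a i else a i.rev) := by
    intro i
    rcases htr i with h | h
    · rw [if_pos h, if_neg (fun hrev => signed_not_pair hJ i ⟨h, hrev⟩), Fin.rev_rev]
    · rw [if_pos h, if_neg (fun hmem => signed_not_pair hJ i ⟨hmem, h⟩)]
  have key := tsum hJ hc (fun i => if i ∈ J then a i else a i.rev) hd
  have hL : ∑ j ∈ J, (if j ∈ J then a j else a j.rev) = ∑ j ∈ J, a j :=
    Finset.sum_congr rfl (fun j hj => if_pos hj)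
  have hR : ∑ i ∈ seg n n, (if i ∈ J then a i else a i.rev)
      = ∑ i ∈ (seg n n).filter (fun i => i ∈ J), a i + ∑ i ∈ missS J, a i.rev := by
    rw [← Finset.sum_filter_add_sum_filter_not (seg n n) (fun i => i ∈ J)]
    congr 1
    · exact Finset.sum_congr rfl (fun i hi => if_pos (Finset.mem_filter.1 hi).2)
    · exact Finset.sum_congr rfl (fun i hi => if_neg (Finset.mem_filter.1 hi).2)
  have hseg : ∑ i ∈ seg n n, a i
      = ∑ i ∈ (seg n n).filter (fun i => i ∈ J), a i + ∑ i ∈ missS J, a i :=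
    (Finset.sum_filter_add_sum_filter_not (seg n n) (fun i => i ∈ J) a).symm
  have hrev : ∑ i ∈ missS J, a i.rev = - ∑ i ∈ missS J, a i := by
    rw [← Finset.sum_neg_distrib]
    exact Finset.sum_congr rfl (fun i _ => arev haE i)
  rw [hL, hR, hrev] at key
  rw [key, hseg]
  ring

lemma transversal_eq_of_missS {J J' : Finset (Fin (2*n))} (hJ : Signed n J)
    (hc : J.card = n) (hJ' : Signed n J') (hc' : J'.card = n)
    (h : missS J = missS J') : J = J' := by
  have htr := transversal hJ hc
  have htr' := transversal hJ' hc'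
  have key : ∀ (K : Finset (Fin (2*n))), Signed n K → K.card = n →
      ∀ j : Fin (2*n), j ∈ K ↔ (if (j : ℕ) < n then j ∉ missS K else j.rev ∈ missS K) := by
    intro K hK hcK j
    have htrK := transversal hK hcK
    have hl := j.isLt
    split_ifs with h'
    · constructor
      · intro hj hmem
        exact (mem_missS.1 hmem).2 hj
      · intro hmem
        by_contra hj
        exact hmem (mem_missS.2 ⟨h', hj⟩)
    · constructor
      · intro hj
        refine mem_missS.2 ⟨by rw [rev_val]; omega, ?_⟩
        intro hrev
        exact signed_not_pair hK j.rev ⟨hrev, by rwa [Fin.rev_rev]⟩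
      · intro hmem
        rcases htrK j with h1 | h1
        · exact h1
        · exact absurd h1 (mem_missS.1 hmem).2
  ext j
  rw [key J hJ hc j, key J' hJ' hc' j, h]

section AVals
variable {a : Fin (2*n) → ℝ} (haE : a ∈ E n)
  (hmono : ∀ i j : Fin (2*n), (i : ℕ) < (j : ℕ) → (j : ℕ) < n → a i < a j)
  (haneg : ∀ i : Fin (2*n), (i : ℕ) < n → a i < 0)

include haE hmono haneg in
lemma odd_min_core (hn : 2 ≤ n) {J : Finset (Fin (2*n))} (hJ : Signed n J)
    (hc : J.card = n) (hchi : ∑ j ∈ J, chi j = 1) :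
    ∑ j ∈ J1 n, a j ≤ ∑ j ∈ J, a j ∧ (J ≠ J1 n → ∑ j ∈ J1 n, a j < ∑ j ∈ J, a j) := by
  classical
  have hn1 : (0:ℕ) < n := by omega
  have hJ1s : Signed n (J1 n) := J1_signed hn
  have hJ1c : (J1 n).card = n := J1_card hn1
  have hnm : n - 1 < 2*n := by omega
  have hmJ1 : missS (J1 n) = {(⟨n-1, hnm⟩ : Fin (2*n))} := by
    ext i
    simp only [mem_missS, mem_J1, Finset.mem_singleton, Fin.ext_iff]
    have := i.isLt
    omega
  have h1 := transversal_sum hJ hc a haE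
  have h2 := transversal_sum hJ1s hJ1c a haE
  rw [hmJ1, Finset.sum_singleton] at h2
  have hcards : ((missS J).card : ZMod 2) = 1 := by rw [missS_card hJ hc, hchi]
  have hodd : Odd (missS J).card := ZMod.natCast_eq_one_iff_odd.1 hcards
  have hSle : ∑ i ∈ missS J, a i ≤ a ⟨n-1, hnm⟩ ∧
      (missS J ≠ {(⟨n-1, hnm⟩ : Fin (2*n))} → ∑ i ∈ missS J, a i < a ⟨n-1, hnm⟩) := by
    rcases eq_or_ne (missS J).card 1 with hc1 | hc1
    · obtain ⟨x, hx⟩ := Finset.card_eq_one.1 hc1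
      have hxS : x ∈ missS J := by rw [hx]; exact Finset.mem_singleton_self x
      have hxlow := (mem_missS.1 hxS).1
      rw [hx, Finset.sum_singleton]
      constructor
      · exact amono_le haE hmono haneg (by simp; omega)
      · intro hne
        have hxne : (x : ℕ) ≠ n - 1 := by
          intro h
          exact hne (by rw [Finset.singleton_inj]; exact Fin.ext (by simpa using h))
        apply amono haE hmono haneg
        show (x : ℕ) < n - 1
        omega
    · have hge2 : 1 < (missS J).card := by
        rcases hodd with ⟨k, hk⟩
        omega
      obtain ⟨i1, hi1, i2, hi2, h12⟩ := Finset.one_lt_card.1 hge2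
      have hsub : {i1, i2} ⊆ missS J := by
        intro x hx
        rcases Finset.mem_insert.1 hx with rfl | hx
        · exact hi1
        · rw [Finset.mem_singleton.1 hx]; exact hi2
      have hle : ∑ i ∈ missS J, a i ≤ ∑ i ∈ ({i1, i2} : Finset (Fin (2*n))), a i := by
        have hneg := Finset.sum_le_sum_of_subset_of_nonneg hsub (f := fun i => - a i)
          (fun i hi _ => by have := haneg i (mem_missS.1 hi).1; linarith)
        simp only [Finset.sum_neg_distrib] at hneg
        linarith
      rw [Finset.sum_pair h12] at hle
      have hb1 : a i1 ≤ a ⟨n-1, hnm⟩ := amono_le haE hmono haneg (by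
        have := (mem_missS.1 hi1).1; simp; omega)
      have hb2 : a i2 ≤ a ⟨n-1, hnm⟩ := amono_le haE hmono haneg (by
        have := (mem_missS.1 hi2).1; simp; omega)
      have hneg : a ⟨n-1, hnm⟩ < 0 := haneg _ (by simp; omega)
      constructor
      · linarith
      · intro _
        linarith
  constructor
  · rw [h1, h2]
    have := hSle.1
    linarith
  · intro hne
    have hSne : missS J ≠ {(⟨n-1, hnm⟩ : Fin (2*n))} := by
      intro h
      exact hne (transversal_eq_of_missS hJ hc hJ1s hJ1c (by rw [h, hmJ1]))
    have := hSle.2 hSne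
    rw [h1, h2]
    linarith

end AVals

/-- the minimizing set `M(I)`. -/
def MI (n : ℕ) (I : Finset (Fin (2*n))) : Finset (Fin (2*n)) :=
  if I.card = n ∧ Odd ((I.filter (fun i : Fin (2*n) => n ≤ (i : ℕ))).card) then J1 n
  else seg n I.card

lemma targetD_eq {hn : 3 ≤ n} (a : Fin (2*n) → ℝ) (I : Finset (Fin (2*n))) :
    targetD n hn a I = ∑ j ∈ MI n I, a j := by
  unfold targetD MI
  split_ifs with h
  · rw [J1_insert (by omega), Finset.sum_insert (by simp [mem_seg]), add_comm]
    simp only [seg]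
  · simp only [seg]

lemma MI_signed (hn : 3 ≤ n) {I : Finset (Fin (2*n))} (hI : Signed n I) :
    Signed n (MI n I) := by
  unfold MI
  split_ifs with h
  · exact J1_signed (by omega)
  · exact seg_signed' (Finset.card_pos.2 hI.1) (signed_card_le hI)

lemma MI_card (hn : 3 ≤ n) {I : Finset (Fin (2*n))} (hI : Signed n I) :
    (MI n I).card = I.card := by
  unfold MI
  split_ifs with h
  · rw [J1_card (by omega), h.1]
  · exact seg_card (by have := signed_card_le hI; omega)

lemma MI_chi (hn : 3 ≤ n) {I : Finset (Fin (2*n))} (hI : Signed n I) (hc : I.card = n) :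
    ∑ j ∈ MI n I, chi j = ∑ j ∈ I, chi j := by
  unfold MI
  split_ifs with h
  · rw [J1_chi (by omega), ← chi_sum_eq, ZMod.natCast_eq_one_iff_odd.2 h.2]
  · have hnotodd : ¬ Odd ((I.filter (fun i : Fin (2*n) => n ≤ (i : ℕ))).card) := by
      intro hodd
      exact h ⟨hc, hodd⟩
    have heven : Even ((I.filter (fun i : Fin (2*n) => n ≤ (i : ℕ))).card) :=
      Nat.not_odd_iff_even.1 hnotodd
    have hI0 : ∑ j ∈ I, chi j = 0 := by
      rw [← chi_sum_eq]
      exact ZMod.natCast_eq_zero_iff_even.2 heven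
    rw [hI0, hc]
    exact Finset.sum_eq_zero (fun i hi => chi_low (mem_seg.1 hi))

section AVals2
variable {a : Fin (2*n) → ℝ} (haE : a ∈ E n)
  (hmono : ∀ i j : Fin (2*n), (i : ℕ) < (j : ℕ) → (j : ℕ) < n → a i < a j)
  (haneg : ∀ i : Fin (2*n), (i : ℕ) < n → a i < 0)

include haE hmono haneg in
lemma vx_core (hn : 3 ≤ n) {u : Equiv.Perm (Fin (2*n))} (hu : u ∈ WD n)
    {I : Finset (Fin (2*n))} (hI : Signed n I) :
    targetD n hn a I ≤ ∑ i ∈ I, a (u i) ∧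
      (I.image u ≠ MI n I → targetD n hn a I < ∑ i ∈ I, a (u i)) := by
  classical
  have hequi := (memWD_iff.1 hu).1
  have himg : ∑ i ∈ I, a (u i) = ∑ j ∈ I.image u, a j :=
    (Finset.sum_image (fun x _ y _ h => u.injective h)).symm
  have hJs : Signed n (I.image u) := signed_image hequi hI
  have hJc : (I.image u).card = I.card := Finset.card_image_of_injective _ u.injective
  rw [targetD_eq, himg]
  unfold MI
  split_ifs with h
  · have hchi : ∑ j ∈ I.image u, chi j = 1 := by
      rw [parimg hu hI h.1, ← chi_sum_eq, ZMod.natCast_eq_one_iff_odd.2 h.2]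
    have := odd_min_core haE hmono haneg (by omega) hJs (by rw [hJc, h.1]) hchi
    exact ⟨this.1, fun hne => this.2 hne⟩
  · constructor
    · have := subset_min_le haE hmono haneg (I.image u)
      rwa [hJc] at this
    · intro hne
      have := subset_min_lt haE hmono haneg (I.image u) (by rwa [hJc])
      rwa [hJc] at this

include haE in
lemma vx_eq (hn : 3 ≤ n) {u : Equiv.Perm (Fin (2*n))}
    {I : Finset (Fin (2*n))} (himg : I.image u = MI n I) :
    ∑ i ∈ I, a (u i) = targetD n hn a I := by
  rw [targetD_eq, ← himg, Finset.sum_image (fun x _ y _ h => u.injective h)]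

end AVals2

end WeightD
namespace WeightD
open Finset

variable {n : ℕ}

lemma mem_FD {hn : 3 ≤ n} {a : Fin (2*n) → ℝ} {I : Finset (Fin (2*n))}
    {x : Fin (2*n) → ℝ} :
    x ∈ FD n hn a I ↔ x ∈ PD n a ∧ ∑ i ∈ I, x i = targetD n hn a I := Iff.rfl

lemma E_convex : Convex ℝ (E n) := by
  intro p hp q hq s t hs ht hst
  intro i hi
  have h1 := hp i hi
  have h2 := hq i hi
  simp only [Pi.add_apply, Pi.smul_apply, smul_eq_mul]
  nlinarith [h1, h2]

lemma mem_E_rev {x : Fin (2*n) → ℝ} (hx : x ∈ E n) (i : Fin (2*n)) :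
    x i.rev = - x i := by
  have hl := i.isLt
  by_cases h : (i : ℕ) < n
  · have := hx i h
    linarith
  · have h2 : (i.rev : ℕ) < n := by rw [rev_val]; omega
    have := hx i.rev h2
    rw [Fin.rev_rev] at this
    linarith

section Face
variable {a : Fin (2*n) → ℝ} (haE : a ∈ E n)
  (hmono : ∀ i j : Fin (2*n), (i : ℕ) < (j : ℕ) → (j : ℕ) < n → a i < a j)
  (haneg : ∀ i : Fin (2*n), (i : ℕ) < n → a i < 0)

/-- the set of "good" vertices for a facet `F(I)`. -/
def GOOD (n : ℕ) (a : Fin (2*n) → ℝ) (I : Finset (Fin (2*n))) :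
    Set (Fin (2*n) → ℝ) :=
  {p | ∃ u ∈ WD n, I.image u = MI n I ∧ p = ptD n a u}

include haE in
lemma PD_subset_E : PD n a ⊆ E n := by
  apply convexHull_min _ E_convex
  rintro p ⟨u, hu, rfl⟩
  intro i hi
  show a (u i) + a (u i.rev) = 0
  rw [hu.1 i, arev haE]
  ring

include haE hmono haneg in
lemma sum_I_LB (hn : 3 ≤ n) {I : Finset (Fin (2*n))} (hI : Signed n I)
    {x : Fin (2*n) → ℝ} (hx : x ∈ PD n a) :
    targetD n hn a I ≤ ∑ i ∈ I, x i := by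
  have hC : Convex ℝ {y : Fin (2*n) → ℝ | targetD n hn a I ≤ ∑ i ∈ I, y i} := by
    intro p hp q hq s t hs ht hst
    simp only [Set.mem_setOf_eq] at *
    have hsum : ∑ i ∈ I, (s • p + t • q) i = s * ∑ i ∈ I, p i + t * ∑ i ∈ I, q i := by
      rw [Finset.mul_sum, Finset.mul_sum, ← Finset.sum_add_distrib]
      exact Finset.sum_congr rfl (fun i _ => by
        simp [Pi.add_apply, Pi.smul_apply, smul_eq_mul])
    rw [hsum]
    have hone : s * targetD n hn a I + t * targetD n hn a I = targetD n hn a I := by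
      rw [← add_mul, hst, one_mul]
    nlinarith [mul_le_mul_of_nonneg_left hp hs, mul_le_mul_of_nonneg_left hq ht, hone]
  apply convexHull_min _ hC hx
  rintro p ⟨u, hu, rfl⟩
  exact (vx_core haE hmono haneg hn hu hI).1

include haE hmono haneg in
lemma GOOD_subset_FD (hn : 3 ≤ n) {I : Finset (Fin (2*n))} :
    GOOD n a I ⊆ FD n hn a I := by
  rintro p ⟨u, hu, himg, rfl⟩
  refine ⟨subset_convexHull ℝ _ ⟨u, hu, rfl⟩, ?_⟩
  exact vx_eq haE hn himg

lemma FD_convex (hn : 3 ≤ n) {I : Finset (Fin (2*n))} : Convex ℝ (FD n hn a I) := by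
  intro p hp q hq s t hs ht hst
  obtain ⟨hp1, hp2⟩ := hp
  obtain ⟨hq1, hq2⟩ := hq
  refine ⟨(convex_convexHull ℝ _) hp1 hq1 hs ht hst, ?_⟩
  have hsum : ∑ i ∈ I, (s • p + t • q) i = s * ∑ i ∈ I, p i + t * ∑ i ∈ I, q i := by
    rw [Finset.mul_sum, Finset.mul_sum, ← Finset.sum_add_distrib]
    exact Finset.sum_congr rfl (fun i _ => by
      simp [Pi.add_apply, Pi.smul_apply, smul_eq_mul])
  rw [hsum, hp2, hq2, ← add_mul, hst, one_mul]

include haE hmono haneg in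
lemma FD_rep (hn : 3 ≤ n) {I : Finset (Fin (2*n))} (hI : Signed n I)
    {x : Fin (2*n) → ℝ} (hx : x ∈ FD n hn a I) :
    x ∈ convexHull ℝ (GOOD n a I) := by
  classical
  obtain ⟨hxP, hxsum⟩ := hx
  rw [PD, _root_.convexHull_eq] at hxP
  obtain ⟨ι, t, w, z, hw0, hw1, hz, hcm⟩ := hxP
  have hxi : ∀ i, x i = ∑ j ∈ t, w j * z j i := by
    intro i
    rw [← hcm, Finset.centerMass_eq_of_sum_1 t z hw1, Finset.sum_apply]
    exact Finset.sum_congr rfl (fun j _ => by simp [smul_eq_mul])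
  have hswap : ∑ i ∈ I, x i = ∑ j ∈ t, w j * ∑ i ∈ I, z j i := by
    rw [Finset.sum_congr rfl (fun i (_ : i ∈ I) => hxi i), Finset.sum_comm]
    exact Finset.sum_congr rfl (fun j _ => (Finset.mul_sum _ _ _).symm)
  have hlb : ∀ j ∈ t, targetD n hn a I ≤ ∑ i ∈ I, z j i := by
    intro j hj
    obtain ⟨u, hu, hzj⟩ := hz j hj
    rw [hzj]
    exact (vx_core haE hmono haneg hn hu hI).1
  have hsum0 : ∑ j ∈ t, w j * (∑ i ∈ I, z j i - targetD n hn a I) = 0 := by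
    have hexp : ∑ j ∈ t, w j * (∑ i ∈ I, z j i - targetD n hn a I)
        = (∑ j ∈ t, w j * ∑ i ∈ I, z j i) - (∑ j ∈ t, w j) * targetD n hn a I := by
      rw [Finset.sum_mul, ← Finset.sum_sub_distrib]
      exact Finset.sum_congr rfl (fun j _ => by ring)
    rw [hexp, ← hswap, hxsum, hw1, one_mul, sub_self]
  have hterm0 : ∀ j ∈ t, w j * (∑ i ∈ I, z j i - targetD n hn a I) = 0 :=
    (Finset.sum_eq_zero_iff_of_nonneg (fun j hj =>
      mul_nonneg (hw0 j hj) (sub_nonneg.2 (hlb j hj)))).1 hsum0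
  set t' := t.filter (fun j => w j ≠ 0) with ht'
  have hw1' : ∑ j ∈ t', w j = 1 := by
    rw [ht', Finset.sum_filter_ne_zero]
    exact hw1
  have hx' : x = t'.centerMass w z := by
    rw [Finset.centerMass_eq_of_sum_1 _ _ hw1', ht']
    rw [← hcm, Finset.centerMass_eq_of_sum_1 _ _ hw1]
    symm
    apply Finset.sum_filter_of_ne
    intro j hj hne hw
    exact hne (by rw [hw, zero_smul])
  rw [hx']
  apply Finset.centerMass_mem_convexHull
  · exact fun j hj => hw0 j (Finset.mem_filter.1 hj).1
  · rw [hw1']; norm_num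
  · intro j hj
    obtain ⟨hjt, hjw⟩ := Finset.mem_filter.1 hj
    obtain ⟨u, hu, hzj⟩ := hz j hjt
    refine ⟨u, hu, ?_, hzj⟩
    by_contra hne
    have := (vx_core haE hmono haneg hn hu hI).2 hne
    have h0 := hterm0 j hjt
    rw [hzj] at h0
    rcases mul_eq_zero.1 h0 with h | h
    · exact hjw h
    · have : (∑ i ∈ I, a (u i)) = targetD n hn a I := by
        have := sub_eq_zero.1 h
        exact this
      linarith [(vx_core haE hmono haneg hn hu hI).2 hne]

include haE hmono haneg in
lemma good_cmp (hn : 3 ≤ n) {I : Finset (Fin (2*n))}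
    {u : Equiv.Perm (Fin (2*n))} (hue : ∀ i, u i.rev = (u i).rev)
    (himg : I.image u = MI n I) {α β : Fin (2*n)}
    (hα : α ∈ I) (hβ : β ∉ I) (hne : α ≠ β.rev) :
    a (u α) < a (u β) := by
  have h1 : u α ∈ MI n I := himg ▸ Finset.mem_image_of_mem u hα
  have h2 : u β ∉ MI n I := by
    intro h
    rw [← himg] at h
    obtain ⟨i, hi, he⟩ := Finset.mem_image.1 h
    exact hβ (u.injective he ▸ hi)
  have h3 : (u β : ℕ) ≠ 2*n - ((u α : ℕ) + 1) := by
    intro h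
    have : u β = (u α).rev := Fin.ext (by rw [rev_val]; exact h)
    rw [← hue α] at this
    have : β = α.rev := u.injective this
    exact hne (by rw [this, Fin.rev_rev])
  apply amono haE hmono haneg
  have hlα := (u α).isLt
  have hlβ := (u β).isLt
  unfold MI at h1 h2
  split_ifs at h1 h2 with hcase
  · rw [mem_J1] at h1 h2
    omega
  · rw [mem_seg] at h1 h2
    omega

include haE hmono haneg in
lemma fd_cmp (hn : 3 ≤ n) {I : Finset (Fin (2*n))} (hI : Signed n I)
    {x : Fin (2*n) → ℝ} (hx : x ∈ FD n hn a I) {α β : Fin (2*n)}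
    (hα : α ∈ I) (hβ : β ∉ I) (hne : α ≠ β.rev) :
    x α < x β := by
  classical
  have hrep := FD_rep haE hmono haneg hn hI hx
  rw [_root_.convexHull_eq] at hrep
  obtain ⟨ι, t, w, z, hw0, hw1, hz, hcm⟩ := hrep
  have hxi : ∀ i, x i = ∑ j ∈ t, w j * z j i := by
    intro i
    rw [← hcm, Finset.centerMass_eq_of_sum_1 t z hw1, Finset.sum_apply]
    exact Finset.sum_congr rfl (fun j _ => by simp [smul_eq_mul])
  have hdiff : ∀ j ∈ t, z j α < z j β := by
    intro j hj
    obtain ⟨u, hu, himg, hzj⟩ := hz j hj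
    rw [hzj]
    exact good_cmp haE hmono haneg hn (memWD_iff.1 hu).1 himg hα hβ hne
  have hex : ∃ j ∈ t, 0 < w j := by
    by_contra h
    push_neg at h
    have : ∑ j ∈ t, w j = 0 :=
      Finset.sum_eq_zero (fun j hj => le_antisymm (h j hj) (hw0 j hj))
    rw [hw1] at this
    norm_num at this
  have hpos : 0 < ∑ j ∈ t, w j * (z j β - z j α) := by
    apply Finset.sum_pos'
    · exact fun j hj => mul_nonneg (hw0 j hj) (le_of_lt (sub_pos.2 (hdiff j hj)))
    · obtain ⟨j, hj, hwj⟩ := hex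
      exact ⟨j, hj, mul_pos hwj (sub_pos.2 (hdiff j hj))⟩
  have hsub : ∑ j ∈ t, w j * (z j β - z j α)
      = (∑ j ∈ t, w j * z j β) - ∑ j ∈ t, w j * z j α := by
    rw [← Finset.sum_sub_distrib]
    exact Finset.sum_congr rfl (fun j _ => by ring)
  rw [hsub] at hpos
  rw [hxi α, hxi β]
  linarith

end Face

end WeightD
namespace WeightD
open Finset

variable {n : ℕ}

lemma image_T1_move {I : Finset (Fin (2*n))} (hI : Signed n I)
    {i j : Fin (2*n)} (hiI : i ∈ I) (hjI : j ∉ I) (hrjI : j.rev ∉ I) :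
    I.image (T1 i j) = insert j (I.erase i) := by
  have h1 : j ≠ i := fun h => hjI (h ▸ hiI)
  have h2 : j ≠ i.rev := fun h => hrjI (by rw [h, Fin.rev_rev]; exact hiI)
  ext y
  simp only [Finset.mem_image, Finset.mem_insert, Finset.mem_erase]
  constructor
  · rintro ⟨x, hx, rfl⟩
    rcases eq_or_ne x i with rfl | hxi
    · left; exact T1_apply_a h1 h2
    · right
      have hxj : x ≠ j := fun h => hjI (h ▸ hx)
      have hxri : x ≠ i.rev := fun h => signed_not_pair hI i ⟨hiI, h ▸ hx⟩
      have hxrj : x ≠ j.rev := fun h => hrjI (h ▸ hx)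
      rw [T1_apply_other hxi hxj hxri hxrj]
      exact ⟨hxi, hx⟩
  · rintro (rfl | ⟨hyi, hy⟩)
    · exact ⟨i, hiI, T1_apply_a h1 h2⟩
    · exact ⟨y, hy, T1_apply_other hyi (fun h => hjI (h ▸ hy))
        (fun h => signed_not_pair hI i ⟨hiI, h ▸ hy⟩) (fun h => hrjI (h ▸ hy))⟩

lemma image_T2_double {I : Finset (Fin (2*n))} (hI : Signed n I)
    {j j2 : Fin (2*n)} (hjI : j ∉ I) (hrjI : j.rev ∈ I)
    (hj2I : j2 ∉ I) (hrj2I : j2.rev ∈ I) (h1 : j2 ≠ j) (h2 : j2 ≠ j.rev) :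
    I.image (T2 j j2) = insert j (insert j2 ((I.erase j.rev).erase j2.rev)) := by
  have hrr : j2.rev ≠ j.rev := fun h => h1 (rev_inj' h)
  ext y
  simp only [Finset.mem_image, Finset.mem_insert, Finset.mem_erase]
  constructor
  · rintro ⟨x, hx, rfl⟩
    rcases eq_or_ne x j.rev with rfl | hxrj
    · left; exact T2_apply_ra h1 h2
    rcases eq_or_ne x j2.rev with rfl | hxrj2
    · right; left; exact T2_apply_rp h1 h2
    · right; right
      have hxj : x ≠ j := fun h => hjI (h ▸ hx)
      have hxj2 : x ≠ j2 := fun h => hj2I (h ▸ hx)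
      rw [T2_apply_other hxj hxrj hxj2 hxrj2]
      exact ⟨hxrj2, hxrj, hx⟩
  · rintro (h | h | ⟨hyrj2, hyrj, hy⟩)
    · exact ⟨j.rev, hrjI, by rw [h]; exact T2_apply_ra h1 h2⟩
    · exact ⟨j2.rev, hrj2I, by rw [h]; exact T2_apply_rp h1 h2⟩
    · exact ⟨y, hy, T2_apply_other (fun h => hjI (h ▸ hy)) hyrj
        (fun h => hj2I (h ▸ hy)) hyrj2⟩

lemma image_T2_flip1 {I : Finset (Fin (2*n))}
    {j p : Fin (2*n)} (hjI : j ∉ I) (hrjI : j.rev ∈ I)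
    (hpI : p ∉ I) (hrpI : p.rev ∉ I) (h1 : p ≠ j) (h2 : p ≠ j.rev) :
    I.image (T2 j p) = insert j (I.erase j.rev) := by
  ext y
  simp only [Finset.mem_image, Finset.mem_insert, Finset.mem_erase]
  constructor
  · rintro ⟨x, hx, rfl⟩
    rcases eq_or_ne x j.rev with rfl | hxrj
    · left; exact T2_apply_ra h1 h2
    · right
      have hxj : x ≠ j := fun h => hjI (h ▸ hx)
      have hxp : x ≠ p := fun h => hpI (h ▸ hx)
      have hxrp : x ≠ p.rev := fun h => hrpI (h ▸ hx)
      rw [T2_apply_other hxj hxrj hxp hxrp]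
      exact ⟨hxrj, hx⟩
  · rintro (h | ⟨hyrj, hy⟩)
    · exact ⟨j.rev, hrjI, by rw [h]; exact T2_apply_ra h1 h2⟩
    · exact ⟨y, hy, T2_apply_other (fun h => hjI (h ▸ hy)) hyrj
        (fun h => hpI (h ▸ hy)) (fun h => hrpI (h ▸ hy))⟩

lemma exist_good (hn : 3 ≤ n) :
    ∀ c (I M : Finset (Fin (2*n))), (I \ M).card ≤ c → Signed n I → Signed n M →
      I.card = M.card → I.card ≠ n - 1 →
      (I.card = n → ∑ j ∈ I, chi j = ∑ j ∈ M, chi j) →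
      ∃ u ∈ WD n, I.image u = M := by
  intro c
  induction c with
  | zero =>
    intro I M hc hI hM hcard _ _
    have hIM : I = M := by
      apply Finset.eq_of_subset_of_card_le _ (le_of_eq hcard.symm)
      intro x hx
      by_contra hxM
      have hmem : x ∈ I \ M := Finset.mem_sdiff.2 ⟨hx, hxM⟩
      have := Finset.card_pos.2 ⟨x, hmem⟩
      omega
    exact ⟨1, one_memWD, by rw [hIM]; simp⟩
  | succ c ih =>
    intro I M hc hI hM hcard hc1 hpar
    by_cases hIM : I = M
    · exact ⟨1, one_memWD, by rw [hIM]; simp⟩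
    have hMI : (M \ I).Nonempty := by
      rcases Finset.eq_empty_or_nonempty (M \ I) with he | h
      · exfalso
        apply hIM
        have hsub : M ⊆ I := by
          intro x hx
          by_contra hxI
          have hmem : x ∈ M \ I := Finset.mem_sdiff.2 ⟨hx, hxI⟩
          rw [he] at hmem
          exact absurd hmem (Finset.notMem_empty x)
        exact (Finset.eq_of_subset_of_card_le hsub (le_of_eq hcard)).symm
      · exact h
    have hdd : (I \ M).card = (M \ I).card := by
      have h1 := Finset.card_inter_add_card_sdiff I M
      have h2 := Finset.card_inter_add_card_sdiff M I
      rw [Finset.inter_comm] at h2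
      omega
    by_cases hb : ∃ j ∈ M \ I, j.rev ∉ I
    · obtain ⟨j, hjMI, hjrev⟩ := hb
      have hjM := (Finset.mem_sdiff.1 hjMI).1
      have hjI := (Finset.mem_sdiff.1 hjMI).2
      have hIMne : (I \ M).Nonempty := by
        rw [← Finset.card_pos, hdd, Finset.card_pos]
        exact hMI
      obtain ⟨i, hiIM⟩ := hIMne
      have hiI := (Finset.mem_sdiff.1 hiIM).1
      have hiM := (Finset.mem_sdiff.1 hiIM).2
      have h1 : j ≠ i := fun h => hjI (h ▸ hiI)
      have h2 : j ≠ i.rev := fun h => hjrev (by rw [h, Fin.rev_rev]; exact hiI)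
      have hwWD : T1 i j ∈ WD n := T1_memWD h1 h2 (by omega)
      have hwe := (memWD_iff.1 hwWD).1
      have himg : I.image (T1 i j) = insert j (I.erase i) := image_T1_move hI hiI hjI hjrev
      have hsd : ((I.image (T1 i j)) \ M) = (I \ M).erase i := by
        rw [himg, Finset.insert_sdiff_of_mem _ hjM]
        ext y
        simp only [Finset.mem_sdiff, Finset.mem_erase]
        tauto
      have hcnew : ((I.image (T1 i j)) \ M).card ≤ c := by
        rw [hsd, Finset.card_erase_of_mem hiIM]
        omega
      have hcimg : (I.image (T1 i j)).card = I.card :=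
        Finset.card_image_of_injective _ (T1 i j).injective
      obtain ⟨u', hu', himg'⟩ := ih (I.image (T1 i j)) M hcnew (signed_image hwe hI) hM
        (by rw [hcimg]; exact hcard) (by rw [hcimg]; exact hc1)
        (fun hcn => by
          rw [hcimg] at hcn
          rw [parimg hwWD hI hcn]
          exact hpar hcn)
      exact ⟨u' * T1 i j, mul_memWD (by omega) hu' hwWD,
        by rw [Equiv.Perm.coe_mul, ← Finset.image_image, himg']⟩
    · push_neg at hb
      obtain ⟨j, hjMI⟩ := hMI
      have hjM := (Finset.mem_sdiff.1 hjMI).1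
      have hjI := (Finset.mem_sdiff.1 hjMI).2
      have hjrev : j.rev ∈ I := hb j hjMI
      by_cases h2e : ∃ j2 ∈ M \ I, j2 ≠ j
      · obtain ⟨j2, hj2MI, hj2ne⟩ := h2e
        have hj2M := (Finset.mem_sdiff.1 hj2MI).1
        have hj2I := (Finset.mem_sdiff.1 hj2MI).2
        have hj2rev : j2.rev ∈ I := hb j2 hj2MI
        have h2' : j2 ≠ j.rev := fun h => hj2I (h ▸ hjrev)
        have hwWD : T2 j j2 ∈ WD n := T2_memWD hj2ne h2' (by omega)
        have hwe := (memWD_iff.1 hwWD).1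
        have himg : I.image (T2 j j2)
            = insert j (insert j2 ((I.erase j.rev).erase j2.rev)) :=
          image_T2_double hI hjI hjrev hj2I hj2rev hj2ne h2'
        have hjrIM : j.rev ∈ I \ M :=
          Finset.mem_sdiff.2 ⟨hjrev, fun h => signed_not_pair hM j ⟨hjM, h⟩⟩
        have hj2rIM : j2.rev ∈ I \ M :=
          Finset.mem_sdiff.2 ⟨hj2rev, fun h => signed_not_pair hM j2 ⟨hj2M, h⟩⟩
        have hrr : j2.rev ≠ j.rev := fun h => hj2ne (rev_inj' h)
        have hsd : ((I.image (T2 j j2)) \ M) = ((I \ M).erase j.rev).erase j2.rev := by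
          rw [himg, Finset.insert_sdiff_of_mem _ hjM, Finset.insert_sdiff_of_mem _ hj2M]
          ext y
          simp only [Finset.mem_sdiff, Finset.mem_erase]
          tauto
        have hcnew : ((I.image (T2 j j2)) \ M).card ≤ c := by
          rw [hsd, Finset.card_erase_of_mem (Finset.mem_erase.2 ⟨hrr, hj2rIM⟩),
            Finset.card_erase_of_mem hjrIM]
          omega
        have hcimg : (I.image (T2 j j2)).card = I.card :=
          Finset.card_image_of_injective _ (T2 j j2).injective
        obtain ⟨u', hu', himg'⟩ := ih (I.image (T2 j j2)) M hcnew (signed_image hwe hI) hM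
          (by rw [hcimg]; exact hcard) (by rw [hcimg]; exact hc1)
          (fun hcn => by
            rw [hcimg] at hcn
            rw [parimg hwWD hI hcn]
            exact hpar hcn)
        exact ⟨u' * T2 j j2, mul_memWD (by omega) hu' hwWD,
          by rw [Equiv.Perm.coe_mul, ← Finset.image_image, himg']⟩
      · push_neg at h2e
        have hMIs : M \ I = {j} := by
          ext y
          rw [Finset.mem_singleton]
          constructor
          · intro hy
            exact h2e y hy
          · rintro rfl
            exact hjMI
        have hIMs : I \ M = {j.rev} := by
          have hjrIM : j.rev ∈ I \ M :=
            Finset.mem_sdiff.2 ⟨hjrev, fun h => signed_not_pair hM j ⟨hjM, h⟩⟩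
          have hc1' : (I \ M).card = 1 := by
            rw [hdd, hMIs, Finset.card_singleton]
          obtain ⟨x, hx⟩ := Finset.card_eq_one.1 hc1'
          rw [hx] at hjrIM ⊢
          rw [Finset.mem_singleton] at hjrIM
          rw [← hjrIM]
        have hcardn : I.card ≠ n := by
          intro hcn
          have hpareq := hpar hcn
          have e1 : ∑ x ∈ I, chi x = ∑ x ∈ I ∩ M, chi x + chi j.rev := by
            rw [← Finset.sum_inter_add_sum_sdiff I M chi, hIMs, Finset.sum_singleton]
          have e2 : ∑ x ∈ M, chi x = ∑ x ∈ M ∩ I, chi x + chi j := by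
            rw [← Finset.sum_inter_add_sum_sdiff M I chi, hMIs, Finset.sum_singleton]
          rw [e1, e2, Finset.inter_comm, chi_rev] at hpareq
          have hcontra : (1 : ZMod 2) = 0 := by linear_combination hpareq
          exact absurd hcontra one_ne_zero
        have hcardle : I.card ≤ n - 2 := by
          have := signed_card_le hI
          omega
        have hexp : ∃ p : Fin (2*n), p ∈ seg n n ∧ p ∉ I.image lowOf := by
          have hns : ¬ (seg n n ⊆ I.image lowOf) := by
            intro hsub
            have hA := Finset.card_le_card hsub
            have hB := Finset.card_image_le (s := I) (f := lowOf)
            rw [seg_card (by omega)] at hA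
            omega
          obtain ⟨p, hp1, hp2⟩ := Finset.not_subset.1 hns
          exact ⟨p, hp1, hp2⟩
        obtain ⟨p, hpseg, hplows⟩ := hexp
        have hplow : (p : ℕ) < n := mem_seg.1 hpseg
        have hpI : p ∉ I := fun h => hplows (by
          rw [← lowOf_eq_self hplow]
          exact Finset.mem_image_of_mem lowOf h)
        have hprI : p.rev ∉ I := fun h => hplows (by
          have : lowOf p.rev = p := by rw [lowOf_rev, lowOf_eq_self hplow]
          rw [← this]
          exact Finset.mem_image_of_mem lowOf h)
        have hpM : p ∉ M := by
          intro h
          by_cases hpI' : p ∈ I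
          · exact hpI hpI'
          · have : p ∈ M \ I := Finset.mem_sdiff.2 ⟨h, hpI'⟩
            rw [hMIs, Finset.mem_singleton] at this
            subst this
            exact hplows (by
              have : lowOf p.rev = p := by rw [lowOf_rev, lowOf_eq_self hplow]
              rw [← this]
              exact Finset.mem_image_of_mem lowOf hjrev)
        have h1 : p ≠ j := fun h => hpM (h ▸ hjM)
        have h2' : p ≠ j.rev := fun h => hpI (h ▸ hjrev)
        refine ⟨T2 j p, T2_memWD h1 h2' (by omega), ?_⟩
        rw [image_T2_flip1 hjI hjrev hpI hprI h1 h2']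
        ext y
        simp only [Finset.mem_insert, Finset.mem_erase]
        constructor
        · rintro (rfl | ⟨hne, hy⟩)
          · exact hjM
          · by_contra hyM
            have hmem : y ∈ I \ M := Finset.mem_sdiff.2 ⟨hy, hyM⟩
            rw [hIMs, Finset.mem_singleton] at hmem
            exact hne hmem
        · intro hyM
          by_cases hyI : y ∈ I
          · right
            refine ⟨?_, hyI⟩
            intro h
            subst h
            exact signed_not_pair hM j ⟨hjM, hyM⟩
          · left
            have hmem : y ∈ M \ I := Finset.mem_sdiff.2 ⟨hyM, hyI⟩
            rw [hMIs, Finset.mem_singleton] at hmem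
            exact hmem

lemma good_nonempty (hn : 3 ≤ n) {I : Finset (Fin (2*n))} (hI : Signed n I)
    (hIc : I.card ≠ n - 1) : ∃ u ∈ WD n, I.image u = MI n I :=
  exist_good hn ((I \ MI n I).card) I (MI n I) le_rfl hI (MI_signed hn hI)
    (MI_card hn hI).symm hIc (fun hcn => (MI_chi hn hI hcn).symm)

end WeightD
namespace WeightD
open Finset

variable {n : ℕ}

section Master
variable {a : Fin (2*n) → ℝ} (haE : a ∈ E n)
  (hmono : ∀ i j : Fin (2*n), (i : ℕ) < (j : ℕ) → (j : ℕ) < n → a i < a j)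
  (haneg : ∀ i : Fin (2*n), (i : ℕ) < n → a i < 0)
  {α β : Fin (2*n)} (h1 : β ≠ α) (h2 : β ≠ α.rev)
  {I : Finset (Fin (2*n))}

include h1 h2 in
lemma image_T1_iff :
    I.image (T1 α β) = I ↔ ((α ∈ I ↔ β ∈ I) ∧ (α.rev ∈ I ↔ β.rev ∈ I)) := by
  constructor
  · intro himg
    constructor
    · constructor
      · intro hm
        have := Finset.mem_image_of_mem (T1 α β) hm
        rw [himg, T1_apply_a h1 h2] at this
        exact this
      · intro hm
        have := Finset.mem_image_of_mem (T1 α β) hm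
        rw [himg, T1_apply_b h1 h2] at this
        exact this
    · constructor
      · intro hm
        have := Finset.mem_image_of_mem (T1 α β) hm
        rw [himg, T1_apply_ra h1 h2] at this
        exact this
      · intro hm
        have := Finset.mem_image_of_mem (T1 α β) hm
        rw [himg, T1_apply_rb h1 h2] at this
        exact this
  · rintro ⟨hiff1, hiff2⟩
    apply Finset.eq_of_subset_of_card_le
    · intro y hy
      obtain ⟨x, hx, rfl⟩ := Finset.mem_image.1 hy
      rcases eq_or_ne x α with rfl | hxa
      · rw [T1_apply_a h1 h2]; exact hiff1.1 hx
      rcases eq_or_ne x β with rfl | hxb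
      · rw [T1_apply_b h1 h2]; exact hiff1.2 hx
      rcases eq_or_ne x α.rev with rfl | hxra
      · rw [T1_apply_ra h1 h2]; exact hiff2.1 hx
      rcases eq_or_ne x β.rev with rfl | hxrb
      · rw [T1_apply_rb h1 h2]; exact hiff2.2 hx
      · rw [T1_apply_other hxa hxb hxra hxrb]; exact hx
    · rw [Finset.card_image_of_injective _ (T1 α β).injective]

include haE hmono haneg h2 in
lemma cmp_c1 (hn : 3 ≤ n) (hIsgn : Signed n I) {x : Fin (2*n) → ℝ}
    (hx : x ∈ FD n hn a I) (hα : α ∈ I) (hβ : β ∉ I) : x α < x β :=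
  fd_cmp haE hmono haneg hn hIsgn hx hα hβ (fun h => h2 (rev_eq_comm.1 h))

include haE hmono haneg h2 in
lemma cmp_c2 (hn : 3 ≤ n) (hIsgn : Signed n I) {x : Fin (2*n) → ℝ}
    (hx : x ∈ FD n hn a I) (hβ : β ∈ I) (hα : α ∉ I) : x β < x α :=
  fd_cmp haE hmono haneg hn hIsgn hx hβ hα h2

include haE hmono haneg h2 in
lemma cmp_c3 (hn : 3 ≤ n) (hIsgn : Signed n I) {x : Fin (2*n) → ℝ}
    (hx : x ∈ FD n hn a I) (hrb : β.rev ∈ I) (hra : α.rev ∉ I) : x α < x β := by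
  have hne : β.rev ≠ (α.rev).rev := by
    rw [Fin.rev_rev]
    intro h
    exact h2 (rev_eq_comm.1 h.symm)
  have := fd_cmp haE hmono haneg hn hIsgn hx hrb hra hne
  have hxE : x ∈ E n := PD_subset_E haE hx.1
  rw [mem_E_rev hxE α, mem_E_rev hxE β] at this
  linarith

include haE hmono haneg h2 in
lemma cmp_c4 (hn : 3 ≤ n) (hIsgn : Signed n I) {x : Fin (2*n) → ℝ}
    (hx : x ∈ FD n hn a I) (hra : α.rev ∈ I) (hrb : β.rev ∉ I) : x β < x α := by
  have hne : α.rev ≠ (β.rev).rev := by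
    rw [Fin.rev_rev]
    intro h
    exact h2 h.symm
  have := fd_cmp haE hmono haneg hn hIsgn hx hra hrb hne
  have hxE : x ∈ E n := PD_subset_E haE hx.1
  rw [mem_E_rev hxE α, mem_E_rev hxE β] at this
  linarith

include haE hmono haneg h1 h2 in
lemma exists_sym_point (hn : 3 ≤ n) (hIsgn : Signed n I) (hIcard : I.card ≠ n - 1)
    (hiff : (α ∈ I ↔ β ∈ I) ∧ (α.rev ∈ I ↔ β.rev ∈ I)) :
    ∃ x ∈ FD n hn a I, x ∈ E n ∧ x α = x β := by
  obtain ⟨u, hu, hugood⟩ := good_nonempty hn hIsgn hIcard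
  have hTWD : T1 α β ∈ WD n := T1_memWD h1 h2 (by omega)
  have hvWD : u * T1 α β ∈ WD n := mul_memWD (by omega) hu hTWD
  have himg : I.image (T1 α β) = I := (image_T1_iff h1 h2).2 hiff
  have hvgood : I.image (u * T1 α β) = MI n I := by
    rw [Equiv.Perm.coe_mul, ← Finset.image_image, himg, hugood]
  set x : Fin (2*n) → ℝ :=
    (1/2 : ℝ) • ptD n a u + (1/2 : ℝ) • ptD n a (u * T1 α β) with hxdef
  have hxFD : x ∈ FD n hn a I := by
    apply FD_convex hn (GOOD_subset_FD haE hmono haneg hn ⟨u, hu, hugood, rfl⟩)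
      (GOOD_subset_FD haE hmono haneg hn ⟨u * T1 α β, hvWD, hvgood, rfl⟩)
      (by norm_num) (by norm_num) (by norm_num)
  refine ⟨x, hxFD, PD_subset_E haE hxFD.1, ?_⟩
  have hva : (u * T1 α β) α = u β := by
    rw [Equiv.Perm.mul_apply, T1_apply_a h1 h2]
  have hvb : (u * T1 α β) β = u α := by
    rw [Equiv.Perm.mul_apply, T1_apply_b h1 h2]
  show (1/2 : ℝ) * ptD n a u α + (1/2 : ℝ) * ptD n a (u * T1 α β) α
      = (1/2 : ℝ) * ptD n a u β + (1/2 : ℝ) * ptD n a (u * T1 α β) β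
  unfold ptD
  rw [hva, hvb]
  ring

include haE hmono haneg h1 h2 in
lemma master (hn : 3 ≤ n) (hIsgn : Signed n I) (hIcard : I.card ≠ n - 1) :
    ((FD n hn a I ∩ {x ∈ E n | x α = x β}).Nonempty ↔ I.image (T1 α β) = I) ∧
    (FD n hn a I ⊆ {x ∈ E n | x α < x β} ↔
      ((α ∈ I ∧ β ∉ I) ∨ (β.rev ∈ I ∧ α.rev ∉ I))) := by
  constructor
  · constructor
    · rintro ⟨x, hxFD, hxE, hxab⟩
      apply (image_T1_iff h1 h2).2
      constructor
      · constructor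
        · intro hα
          by_contra hβ
          have := cmp_c1 haE hmono haneg h2 hn hIsgn hxFD hα hβ
          linarith
        · intro hβ
          by_contra hα
          have := cmp_c2 haE hmono haneg h2 hn hIsgn hxFD hβ hα
          linarith
      · constructor
        · intro hra
          by_contra hrb
          have := cmp_c4 haE hmono haneg h2 hn hIsgn hxFD hra hrb
          linarith
        · intro hrb
          by_contra hra
          have := cmp_c3 haE hmono haneg h2 hn hIsgn hxFD hrb hra
          linarith
    · intro himg
      obtain ⟨x, hxFD, hxE, hxab⟩ := exists_sym_point haE hmono haneg h1 h2 hn hIsgn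
        hIcard ((image_T1_iff h1 h2).1 himg)
      exact ⟨x, hxFD, hxE, hxab⟩
  · constructor
    · intro hsub
      by_contra hcond
      push_neg at hcond
      by_cases hxor : (β ∈ I ∧ α ∉ I) ∨ (α.rev ∈ I ∧ β.rev ∉ I)
      · obtain ⟨u, hu, hugood⟩ := good_nonempty hn hIsgn hIcard
        have hxFD : ptD n a u ∈ FD n hn a I :=
          GOOD_subset_FD haE hmono haneg hn ⟨u, hu, hugood, rfl⟩
        have hlt := (hsub hxFD).2
        rcases hxor with ⟨hβ, hα⟩ | ⟨hra, hrb⟩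
        · have := cmp_c2 haE hmono haneg h2 hn hIsgn hxFD hβ hα
          linarith
        · have := cmp_c4 haE hmono haneg h2 hn hIsgn hxFD hra hrb
          linarith
      · push_neg at hxor
        have hiff : (α ∈ I ↔ β ∈ I) ∧ (α.rev ∈ I ↔ β.rev ∈ I) := by
          obtain ⟨hcond1, hcond2⟩ := hcond
          obtain ⟨hxor1, hxor2⟩ := hxor
          constructor <;> constructor <;> intro h <;> tauto
        obtain ⟨x, hxFD, hxE, hxab⟩ := exists_sym_point haE hmono haneg h1 h2 hn hIsgn
          hIcard hiff
        have := (hsub hxFD).2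
        linarith
    · intro hcond
      intro x hxFD
      refine ⟨PD_subset_E haE hxFD.1, ?_⟩
      rcases hcond with ⟨hα, hβ⟩ | ⟨hrb, hra⟩
      · exact cmp_c1 haE hmono haneg h2 hn hIsgn hxFD hα hβ
      · exact cmp_c3 haE hmono haneg h2 hn hIsgn hxFD hrb hra

end Master

end WeightD
open WeightD in
/-- Proposition D.3: position of the facets of `P_{D_n}` relative to the
reflecting hyperplanes. -/
theorem statement19 (n : ℕ) (hn : 3 ≤ n) (a : Fin (2 * n) → ℝ) (haE : a ∈ E n)
    (hmono : ∀ i j : Fin (2 * n), (i : ℕ) < (j : ℕ) → (j : ℕ) < n → a i < a j)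
    (haneg : ∀ i : Fin (2 * n), (i : ℕ) < n → a i < 0)
    (k : ℕ) (hk : k < n) (I : Finset (Fin (2 * n)))
    (hIsgn : Signed n I) (hIcard : I.card ≠ n - 1) :
    ((FD n hn a I ∩ HD n hn k hk).Nonempty ↔ I.image (sD n hn k hk) = I) ∧
    (FD n hn a I ⊆ HDlt n hn k hk ↔ condD n hn k hk I) := by
  by_cases h : k + 1 < n
  · have hm := master (α := ⟨k, by omega⟩) (β := ⟨k+1, by omega⟩) haE hmono haneg
      (by simp only [ne_eq, Fin.ext_iff]; omega)
      (by simp only [ne_eq, Fin.ext_iff, rev_val]; omega) hn hIsgn hIcard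
    simp only [sD, HD, HDlt, condD, dif_pos h]
    exact hm
  · have hm := master (α := ⟨n-2, by omega⟩) (β := ⟨n, by omega⟩) haE hmono haneg
      (by simp only [ne_eq, Fin.ext_iff]; omega)
      (by simp only [ne_eq, Fin.ext_iff, rev_val]; omega) hn hIsgn hIcard
    have hrb : (⟨n, by omega⟩ : Fin (2*n)).rev = (⟨n-1, by omega⟩ : Fin (2*n)) := by
      apply Fin.ext
      rw [rev_val]
      simp
      omega
    have hra : (⟨n-2, by omega⟩ : Fin (2*n)).rev = (⟨n+1, by omega⟩ : Fin (2*n)) := by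
      apply Fin.ext
      rw [rev_val]
      simp
      omega
    simp only [sD, HD, HDlt, condD, dif_neg h]
    exact ⟨hm.1, hm.2.trans (by rw [hrb, hra]; exact or_comm)⟩
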